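/- Let S be a commutative monoid with the algebraic preorder, and suppose S is almost unperforated, i.e. for all x, y ∈ S and n ∈ ℕ, (n+1)·x ≤ n·y implies x ≤ y. If x ∈ S satisfies (n+1)·x ≤ n·x for some n ≥ 1, then 2·x ≤ x. -/
import Mathlib

/-- In an almost unperforated commutative monoid (with the algebraic
preorder `a ≤ b ↔ ∃ c, b = a + c`), if `(n+1)·x ≤ n·x` for some `n ≥ 1`, then `2·x ≤ x`. -/
theorem stmt1 {S : Type*} [AddCommMonoid S]
    (hS : ∀ (x y : S) (n : ℕ), (∃ z : S, n • y = (n + 1) • x + z) → ∃ z : S, y = x + z)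
    (x : S) (n : ℕ) (hn : 1 ≤ n)
    (h : ∃ z : S, n • x = (n + 1) • x + z) :
    ∃ z : S, x = 2 • x + z := by
  obtain ⟨z, hz⟩ := h
  have key : ∀ k : ℕ, n • x = (n + k) • x + k • z := by
    intro k
    induction k with
    | zero => simp
    | succ k ih =>
      calc n • x = (n + k) • x + k • z := ih
        _ = n • x + k • x + k • z := by rw [add_smul]
        _ = ((n + 1) • x + z) + k • x + k • z := by rw [hz]
        _ = (n + 1 + k) • x + (k + 1) • z := by
            rw [add_smul, add_smul, add_smul, one_smul, succ_nsmul]; abel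
        _ = (n + (k + 1)) • x + (k + 1) • z := by ring_nf
  refine hS (2 • x) x n ⟨(n + 2) • z, ?_⟩
  calc n • x = (n + (n + 2)) • x + (n + 2) • z := key (n + 2)
    _ = (n + 1) • 2 • x + (n + 2) • z := by
        rw [smul_smul]; ring_nf
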